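/- Let u, v be linearly independent unit vectors in ℝ² and let f = (f₁, f₂) be a vector field on ℝ² with f₁, f₂ ∈ C²_c(ℝ²). Then for every x ∈ ℝ², div f(x) = -(1/det(v,u)) · D_u D_v (T f)(x). -/

import Mathlib

open MeasureTheory Matrix

noncomputable section

/-- Dot product on ℝ². -/
def dot2 (u v : ℝ × ℝ) : ℝ := u.1 * v.1 + u.2 * v.2

/-- `x^⊥ = (-x₂, x₁)`. -/
def perp2 (x : ℝ × ℝ) : ℝ × ℝ := (-x.2, x.1)

/-- Divergent beam transform `X_u h (x) = ∫₀^∞ h(x + t u) dt`. -/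
def Xbeam (u : ℝ × ℝ) (h : ℝ × ℝ → ℝ) (x : ℝ × ℝ) : ℝ :=
  ∫ t in Set.Ioi (0 : ℝ), h (x + t • u)

/-- First moment divergent beam transform `X¹_u h (x) = ∫₀^∞ t h(x + t u) dt`. -/
def Xmom (u : ℝ × ℝ) (h : ℝ × ℝ → ℝ) (x : ℝ × ℝ) : ℝ :=
  ∫ t in Set.Ioi (0 : ℝ), t * h (x + t • u)

/-- Directional derivative `D_u h = u · ∇ h`. -/
def Ddir (u : ℝ × ℝ) (h : ℝ × ℝ → ℝ) (x : ℝ × ℝ) : ℝ := fderiv ℝ h x u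

/-- Twice continuously differentiable, compactly supported. -/
def IsC2c (h : ℝ × ℝ → ℝ) : Prop := ContDiff ℝ 2 h ∧ HasCompactSupport h

/-- `div f = ∂f₁/∂x₁ + ∂f₂/∂x₂`. -/
def divf (f₁ f₂ : ℝ × ℝ → ℝ) (x : ℝ × ℝ) : ℝ :=
  fderiv ℝ f₁ x (1, 0) + fderiv ℝ f₂ x (0, 1)

/-- `curl f = ∂f₂/∂x₁ - ∂f₁/∂x₂`. -/
def curlf (f₁ f₂ : ℝ × ℝ → ℝ) (x : ℝ × ℝ) : ℝ :=
  fderiv ℝ f₂ x (1, 0) - fderiv ℝ f₁ x (0, 1)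

/-- Longitudinal V-line transform `L f = -X_u (f·u) + X_v (f·v)`. -/
def VlineL (u v : ℝ × ℝ) (f₁ f₂ : ℝ × ℝ → ℝ) (x : ℝ × ℝ) : ℝ :=
  - Xbeam u (fun y => f₁ y * u.1 + f₂ y * u.2) x
  + Xbeam v (fun y => f₁ y * v.1 + f₂ y * v.2) x

/-- Transverse V-line transform `T f = -X_u (f·u^⊥) + X_v (f·v^⊥)`. -/
def VlineT (u v : ℝ × ℝ) (f₁ f₂ : ℝ × ℝ → ℝ) (x : ℝ × ℝ) : ℝ :=
  - Xbeam u (fun y => f₁ y * (perp2 u).1 + f₂ y * (perp2 u).2) x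
  + Xbeam v (fun y => f₁ y * (perp2 v).1 + f₂ y * (perp2 v).2) x

/-- First moment longitudinal V-line transform `I f = -X¹_u (f·u) + X¹_v (f·v)`. -/
def VmomL (u v : ℝ × ℝ) (f₁ f₂ : ℝ × ℝ → ℝ) (x : ℝ × ℝ) : ℝ :=
  - Xmom u (fun y => f₁ y * u.1 + f₂ y * u.2) x
  + Xmom v (fun y => f₁ y * v.1 + f₂ y * v.2) x

/-- First moment transverse V-line transform `J f = -X¹_u (f·u^⊥) + X¹_v (f·v^⊥)`. -/
def VmomT (u v : ℝ × ℝ) (f₁ f₂ : ℝ × ℝ → ℝ) (x : ℝ × ℝ) : ℝ :=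
  - Xmom u (fun y => f₁ y * (perp2 u).1 + f₂ y * (perp2 u).2) x
  + Xmom v (fun y => f₁ y * (perp2 v).1 + f₂ y * (perp2 v).2) x

/-- Radon transform `R h (ψ, s) = ∫_ℝ h (s ψ + t ψ^⊥) dt`. -/
def Radon2 (h : ℝ × ℝ → ℝ) (ψ : ℝ × ℝ) (s : ℝ) : ℝ :=
  ∫ t : ℝ, h (s • ψ + t • perp2 ψ)

/-- The (vector-valued) star transform. -/
def starS (m : ℕ) (γ : Fin m → ℝ × ℝ) (c : Fin m → ℝ)
    (f₁ f₂ : ℝ × ℝ → ℝ) (x : ℝ × ℝ) : ℝ × ℝ :=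
  ∑ i, c i •
    (Xbeam (γ i) (fun y => f₁ y * (γ i).1 + f₂ y * (γ i).2) x,
     Xbeam (γ i) (fun y => f₁ y * (perp2 (γ i)).1 + f₂ y * (perp2 (γ i)).2) x)

/-- `γ(ψ) = -∑ cᵢ γᵢ / (ψ·γᵢ)`. -/
def starGamma (m : ℕ) (γ : Fin m → ℝ × ℝ) (c : Fin m → ℝ) (ψ : ℝ × ℝ) : ℝ × ℝ :=
  - ∑ i, (c i / dot2 ψ (γ i)) • γ i

/-- A star configuration is symmetric if `m = 2k` and, after re-indexing by a
permutation, `γᵢ = -γ_{k+i}` and `cᵢ = -c_{k+i}` for `i = 1, …, k`. -/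
def StarSymmetric (m : ℕ) (γ : Fin m → ℝ × ℝ) (c : Fin m → ℝ) : Prop :=
  ∃ k : ℕ, ∃ hk : m = 2 * k, ∃ σ : Equiv.Perm (Fin m),
    ∀ i : Fin m, ∀ hi : (i : ℕ) < k,
      γ (σ i) = - γ (σ ⟨(i : ℕ) + k, by omega⟩) ∧
      c (σ i) = - c (σ ⟨(i : ℕ) + k, by omega⟩)


/-! Differentiation commutes with the divergent beam transform, and the fundamental theorem of
calculus along the ray gives `D_u (X_u h) = -h` for compactly supported `h`. Applying `D_v` and then
`D_u` to `T f = -X_u (f·u^⊥) + X_v (f·v^⊥)` therefore leaves `D_v (f·u^⊥) - D_u (f·v^⊥)`, and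
expanding the directional derivatives in coordinates shows this is `-det(v,u) · div f`. -/

open Set Pointwise

lemma HasCompactSupport.comp_line {F : Type*} [Zero F] {h : ℝ × ℝ → F}
    (hs : HasCompactSupport h) {u : ℝ × ℝ} (hu : u ≠ 0) (x : ℝ × ℝ) :
    HasCompactSupport (fun t : ℝ => h (x + t • u)) :=
  hs.comp_isClosedEmbedding ((Homeomorph.addLeft x).isClosedEmbedding.comp
    (isClosedEmbedding_smul_left hu))

lemma Continuous.integrableOn_ray {F : Type*} [NormedAddCommGroup F] {h : ℝ × ℝ → F}
    (hc : Continuous h) (hs : HasCompactSupport h) {u : ℝ × ℝ} (hu : u ≠ 0) (x : ℝ × ℝ) :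
    IntegrableOn (fun t : ℝ => h (x + t • u)) (Ioi 0) :=
  ((hc.comp (by fun_prop)).integrable_of_hasCompactSupport (hs.comp_line hu x)).integrableOn

lemma ContDiff.Ddir {n m : WithTop ℕ∞} {h : ℝ × ℝ → ℝ} (hh : ContDiff ℝ n h) (hmn : m + 1 ≤ n)
    (w : ℝ × ℝ) : ContDiff ℝ m (Ddir w h) :=
  (ContinuousLinearMap.apply ℝ ℝ w).contDiff.comp (hh.fderiv_right hmn)

lemma HasCompactSupport.Ddir {h : ℝ × ℝ → ℝ} (hs : HasCompactSupport h) (w : ℝ × ℝ) :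
    HasCompactSupport (Ddir w h) :=
  hs.fderiv_apply ℝ w

section Xbeam

variable {h : ℝ × ℝ → ℝ} {u : ℝ × ℝ}

lemma hasFDerivAt_Xbeam (hd : ContDiff ℝ 1 h) (hs : HasCompactSupport h) (hu : u ≠ 0)
    (x : ℝ × ℝ) :
    HasFDerivAt (Xbeam u h) (∫ t in Ioi (0 : ℝ), fderiv ℝ h (x + t • u)) x := by
  have hDh : Continuous (fderiv ℝ h) := hd.continuous_fderiv one_ne_zero
  obtain ⟨C, hC⟩ := (continuous_norm.comp hDh).bounded_above_of_compact_support
    (hs.fderiv ℝ).norm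
  -- the rays from `ball x 1` meet `tsupport (fderiv ℝ h)` only at parameters in the compact `S`
  set S : Set ℝ := (fun t : ℝ => t • u) ⁻¹' (tsupport (fderiv ℝ h) - Metric.closedBall x 1)
  have hS : IsCompact S := (isClosedEmbedding_smul_left hu).isCompact_preimage <| by
    rw [sub_eq_add_neg]
    exact IsCompact.add (hs.fderiv ℝ) (isCompact_closedBall x 1).neg
  have hvanish : ∀ t ∉ S, ∀ x' ∈ Metric.ball x 1, fderiv ℝ h (x' + t • u) = 0 := by
    intro t ht x' hx'
    by_contra hne
    exact ht ⟨x' + t • u, subset_tsupport _ hne, x', Metric.ball_subset_closedBall hx',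
      add_sub_cancel_left x' (t • u)⟩
  have hbound : ∀ t, ∀ x' ∈ Metric.ball x 1,
      ‖fderiv ℝ h (x' + t • u)‖ ≤ S.indicator (fun _ => C) t := by
    intro t x' hx'
    by_cases ht : t ∈ S
    · simpa [indicator_of_mem ht] using hC (x' + t • u)
    · simp [indicator_of_notMem ht, hvanish t ht x' hx']
  have hderiv : ∀ t : ℝ, ∀ x' ∈ Metric.ball x 1,
      HasFDerivAt (fun y => h (y + t • u)) (fderiv ℝ h (x' + t • u)) x' := fun t x' _ => by
    simpa [Function.comp_def] using ((hd.differentiable one_ne_zero _).hasFDerivAt).comp x'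
      ((hasFDerivAt_id x').add_const (t • u))
  exact hasFDerivAt_integral_of_dominated_of_fderiv_le (F := fun x' t => h (x' + t • u))
    (Metric.ball_mem_nhds x one_pos)
    (.of_forall fun x' => (hd.continuous.comp (by fun_prop)).aestronglyMeasurable)
    (hd.continuous.integrableOn_ray hs hu x)
    (hDh.comp (by fun_prop)).aestronglyMeasurable
    (.of_forall hbound)
    ((integrableOn_const hS.measure_lt_top.ne).integrable_indicator hS.measurableSet).restrict
    (.of_forall hderiv)

lemma differentiable_Xbeam (hd : ContDiff ℝ 1 h) (hs : HasCompactSupport h) (hu : u ≠ 0) :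
    Differentiable ℝ (Xbeam u h) := fun x =>
  (hasFDerivAt_Xbeam hd hs hu x).differentiableAt

lemma Ddir_Xbeam (hd : ContDiff ℝ 1 h) (hs : HasCompactSupport h) (hu : u ≠ 0) (w : ℝ × ℝ) :
    Ddir w (Xbeam u h) = Xbeam u (Ddir w h) := by
  funext x
  rw [Ddir, (hasFDerivAt_Xbeam hd hs hu x).fderiv, ContinuousLinearMap.integral_apply
    ((hd.continuous_fderiv one_ne_zero).integrableOn_ray (hs.fderiv ℝ) hu x) w]
  rfl

lemma Xbeam_Ddir_self (hd : ContDiff ℝ 1 h) (hs : HasCompactSupport h) (hu : u ≠ 0)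
    (x : ℝ × ℝ) : Xbeam u (Ddir u h) x = -h x := by
  have hline : ∀ t : ℝ, deriv (fun s : ℝ => h (x + s • u)) t = Ddir u h (x + t • u) := fun t =>
    (((hd.differentiable one_ne_zero _).hasFDerivAt).comp_hasDerivAt t
      (((hasDerivAt_id t).smul_const u).const_add x |>.congr_deriv (one_smul ℝ u))).deriv
  have := (hs.comp_line hu x).integral_Ioi_deriv_eq (hd.comp (by fun_prop)) 0
  simpa [Xbeam, Function.comp_def, hline] using this

lemma Ddir_Xbeam_self (hd : ContDiff ℝ 1 h) (hs : HasCompactSupport h) (hu : u ≠ 0) :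
    Ddir u (Xbeam u h) = -h := by
  rw [Ddir_Xbeam hd hs hu]
  exact funext (Xbeam_Ddir_self hd hs hu)

end Xbeam

-- `f·w^⊥`, so that `VlineT u v f₁ f₂` is `-Xbeam u (dotPerp f₁ f₂ u) + Xbeam v (dotPerp f₁ f₂ v)`
def dotPerp (f₁ f₂ : ℝ × ℝ → ℝ) (w : ℝ × ℝ) : ℝ × ℝ → ℝ := fun y =>
  f₁ y * (perp2 w).1 + f₂ y * (perp2 w).2

lemma IsC2c.dotPerp {f₁ f₂ : ℝ × ℝ → ℝ} (hf₁ : IsC2c f₁) (hf₂ : IsC2c f₂) (w : ℝ × ℝ) :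
    IsC2c (dotPerp f₁ f₂ w) :=
  ⟨(hf₁.1.mul contDiff_const).add (hf₂.1.mul contDiff_const),
    hf₁.2.mul_right.add hf₂.2.mul_right⟩

lemma Ddir_Ddir_VlineT {u v : ℝ × ℝ} (hu : u ≠ 0) (hv : v ≠ 0) {f₁ f₂ : ℝ × ℝ → ℝ}
    (hf₁ : IsC2c f₁) (hf₂ : IsC2c f₂) (x : ℝ × ℝ) :
    Ddir u (Ddir v (VlineT u v f₁ f₂)) x
      = Ddir v (dotPerp f₁ f₂ u) x - Ddir u (dotPerp f₁ f₂ v) x := by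
  obtain ⟨hgU, hgU_cs⟩ := hf₁.dotPerp hf₂ u
  obtain ⟨hgV, hgV_cs⟩ := hf₁.dotPerp hf₂ v
  have hgU₁ : ContDiff ℝ 1 (dotPerp f₁ f₂ u) := hgU.of_le one_le_two
  have hgV₁ : ContDiff ℝ 1 (dotPerp f₁ f₂ v) := hgV.of_le one_le_two
  have hDgU : ContDiff ℝ 1 (Ddir v (dotPerp f₁ f₂ u)) := hgU.Ddir le_rfl v
  have hDvT : Ddir v (VlineT u v f₁ f₂)
      = -Xbeam u (Ddir v (dotPerp f₁ f₂ u)) - dotPerp f₁ f₂ v := by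
    funext z
    change fderiv ℝ (-Xbeam u (dotPerp f₁ f₂ u) + Xbeam v (dotPerp f₁ f₂ v)) z v = _
    rw [fderiv_add ((differentiable_Xbeam hgU₁ hgU_cs hu z).neg)
      (differentiable_Xbeam hgV₁ hgV_cs hv z), fderiv_neg]
    change -Ddir v (Xbeam u _) z + Ddir v (Xbeam v _) z = _
    rw [Ddir_Xbeam hgU₁ hgU_cs hu, Ddir_Xbeam_self hgV₁ hgV_cs hv]
    simp only [Pi.sub_apply, Pi.neg_apply, sub_eq_add_neg]
  rw [hDvT]
  change fderiv ℝ (-Xbeam u (Ddir v (dotPerp f₁ f₂ u)) - dotPerp f₁ f₂ v) x u = _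
  rw [fderiv_sub ((differentiable_Xbeam hDgU (hgU_cs.Ddir v) hu x).neg)
    (hgV₁.differentiable one_ne_zero x), fderiv_neg]
  change -Ddir u (Xbeam u _) x - Ddir u _ x = _
  rw [Ddir_Xbeam_self hDgU (hgU_cs.Ddir v) hu]
  simp only [Pi.neg_apply, neg_neg]

lemma Ddir_eq_fst_mul_add_snd_mul (g : ℝ × ℝ → ℝ) (w x : ℝ × ℝ) :
    Ddir w g x = w.1 * Ddir (1, 0) g x + w.2 * Ddir (0, 1) g x := by
  have hw : w = w.1 • ((1 : ℝ), (0 : ℝ)) + w.2 • ((0 : ℝ), (1 : ℝ)) := by ext <;> simp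
  conv_lhs => rw [hw]
  simp only [Ddir, map_add, map_smul, smul_eq_mul]

lemma Ddir_dotPerp {f₁ f₂ : ℝ × ℝ → ℝ} {x : ℝ × ℝ} (hf₁ : DifferentiableAt ℝ f₁ x)
    (hf₂ : DifferentiableAt ℝ f₂ x) (w w' : ℝ × ℝ) :
    Ddir w' (dotPerp f₁ f₂ w) x = -w.2 * Ddir w' f₁ x + w.1 * Ddir w' f₂ x := by
  unfold Ddir dotPerp
  rw [fderiv_fun_add (hf₁.mul_const _) (hf₂.mul_const _), fderiv_mul_const hf₁,
    fderiv_mul_const hf₂]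
  simp only [_root_.add_apply, _root_.smul_apply, smul_eq_mul, perp2]

lemma Ddir_dotPerp_sub_Ddir_dotPerp {f₁ f₂ : ℝ × ℝ → ℝ} {x : ℝ × ℝ}
    (hf₁ : DifferentiableAt ℝ f₁ x) (hf₂ : DifferentiableAt ℝ f₂ x) (u v : ℝ × ℝ) :
    Ddir v (dotPerp f₁ f₂ u) x - Ddir u (dotPerp f₁ f₂ v) x
      = -(v.1 * u.2 - u.1 * v.2) * divf f₁ f₂ x := by
  rw [Ddir_dotPerp hf₁ hf₂, Ddir_dotPerp hf₁ hf₂, Ddir_eq_fst_mul_add_snd_mul f₁ v,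
    Ddir_eq_fst_mul_add_snd_mul f₂ v, Ddir_eq_fst_mul_add_snd_mul f₁ u,
    Ddir_eq_fst_mul_add_snd_mul f₂ u, divf]
  simp only [Ddir]
  ring

lemma det_ne_zero_of_linearIndependent {u v : ℝ × ℝ} (huv : LinearIndependent ℝ ![u, v]) :
    v.1 * u.2 - u.1 * v.2 ≠ 0 := by
  intro hdet
  rw [LinearIndependent.pair_iff] at huv
  -- if `det(v,u) = 0` then `v₂ u - u₂ v = 0` and `v₁ u - u₁ v = 0`
  obtain ⟨hv₂, hu₂⟩ := huv v.2 (-u.2) (by ext <;> simp <;> linarith)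
  obtain ⟨hv₁, hu₁⟩ := huv v.1 (-u.1) (by ext <;> simp <;> linarith)
  exact one_ne_zero (huv 1 0 (by ext <;> simp <;> linarith)).1

theorem stmt3_general (u v : ℝ × ℝ)
    (huv : LinearIndependent ℝ ![u, v])
    (f₁ f₂ : ℝ × ℝ → ℝ) (hf₁ : IsC2c f₁) (hf₂ : IsC2c f₂) (x : ℝ × ℝ) :
    divf f₁ f₂ x
      = -(1 / (v.1 * u.2 - u.1 * v.2)) * Ddir u (Ddir v (VlineT u v f₁ f₂)) x := by
  have hdet := det_ne_zero_of_linearIndependent huv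
  rw [Ddir_Ddir_VlineT (by simpa using huv.ne_zero 0) (by simpa using huv.ne_zero 1) hf₁ hf₂,
    Ddir_dotPerp_sub_Ddir_dotPerp (hf₁.1.differentiable two_ne_zero x)
      (hf₂.1.differentiable two_ne_zero x)]
  field_simp

/-- `div f = -(1 / det(v,u)) · D_u D_v (T f)`. -/
theorem stmt3 (u v : ℝ × ℝ) (hu : u.1 ^ 2 + u.2 ^ 2 = 1) (hv : v.1 ^ 2 + v.2 ^ 2 = 1)
    (huv : LinearIndependent ℝ ![u, v])
    (f₁ f₂ : ℝ × ℝ → ℝ) (hf₁ : IsC2c f₁) (hf₂ : IsC2c f₂) (x : ℝ × ℝ) :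
    divf f₁ f₂ x
      = -(1 / (v.1 * u.2 - u.1 * v.2)) * Ddir u (Ddir v (VlineT u v f₁ f₂)) x :=
  stmt3_general u v huv f₁ f₂ hf₁ hf₂ x
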